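/- Invariance of the fundamental invariants Δ₁–Δ₅ of K²(E³): for all 3×3 real matrices A, B, C with A and C symmetric, all λ ∈ SO(3) and all δ ∈ ℝ³, with (Ã, B̃, C̃) the transformed parameters, each of the following quantities takes the same value on (Ã, B̃, C̃) as on (A, B, C): Δ₁ = tr B, Δ₂ = tr C, Δ₃ = Σ_{i,j} B_{ij} C_{ij}, Δ₄ = Σ_{i,j} C_{ij} C_{ij}, Δ₅ = tr(B²) + Σ_{i,j} A_{ij} C_{ij}. -/
import Mathlib


open Matrix

/-- 3×3 real matrices. -/
abbrev M3 := Matrix (Fin 3) (Fin 3) ℝ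

/-- Membership in SO(3). -/
def SO3 (l : M3) : Prop := lᵀ * l = 1 ∧ l.det = 1

/-- The antisymmetric matrix `W_δ` with rows `(0, δ₃, −δ₂)`, `(−δ₃, 0, δ₁)`,
`(δ₂, −δ₁, 0)`. -/
def Wmat (δ : Fin 3 → ℝ) : M3 :=
  !![0, δ 2, -δ 1; -δ 2, 0, δ 0; δ 1, -δ 0, 0]

/-- Transformed parameter `Ã = λᵀAλ + λᵀBμ + μᵀBᵀλ + μᵀCμ`, with `μ = W_δ λ`. -/
def tA (A B C l : M3) (δ : Fin 3 → ℝ) : M3 :=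
  lᵀ * A * l + lᵀ * B * (Wmat δ * l) + (Wmat δ * l)ᵀ * Bᵀ * l
    + (Wmat δ * l)ᵀ * C * (Wmat δ * l)

/-- Transformed parameter `B̃ = λᵀBλ + μᵀCλ`, with `μ = W_δ λ`. -/
def tB (B C l : M3) (δ : Fin 3 → ℝ) : M3 :=
  lᵀ * B * l + (Wmat δ * l)ᵀ * C * l

/-- Transformed parameter `C̃ = λᵀCλ`. -/
def tC (C l : M3) : M3 := lᵀ * C * l

/-- The Levi-Civita symbol on `Fin 3`. -/
noncomputable def eps (i j k : Fin 3) : ℝ :=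
  (((i : ℕ) : ℝ) - ((j : ℕ) : ℝ)) * (((j : ℕ) : ℝ) - ((k : ℕ) : ℝ))
    * (((k : ℕ) : ℝ) - ((i : ℕ) : ℝ)) / 2

/-- `Δ₁ = tr B`. -/
def Delta1 (B : M3) : ℝ := B.trace

/-- `Δ₂ = tr C`. -/
def Delta2 (C : M3) : ℝ := C.trace

/-- `Δ₃ = B_{ij} C_{ij}`. -/
def Delta3 (B C : M3) : ℝ := ∑ i : Fin 3, ∑ j : Fin 3, B i j * C i j

/-- `Δ₄ = C_{ij} C_{ij}`. -/
def Delta4 (C : M3) : ℝ := ∑ i : Fin 3, ∑ j : Fin 3, C i j * C i j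

/-- `Δ₅ = tr(B²) + A_{ij} C_{ij}`. -/
def Delta5 (A B C : M3) : ℝ :=
  (B * B).trace + ∑ i : Fin 3, ∑ j : Fin 3, A i j * C i j


section AuxInvariants

private lemma conj_mul' (l X Y : M3) (hl' : l * lᵀ = 1) :
    (lᵀ * X * l) * (lᵀ * Y * l) = lᵀ * (X * Y) * l := by
  calc (lᵀ * X * l) * (lᵀ * Y * l) = lᵀ * X * (l * lᵀ) * Y * l := by noncomm_ring
    _ = lᵀ * (X * Y) * l := by rw [hl']; noncomm_ring

private lemma conj_trace (l X : M3) (hl' : l * lᵀ = 1) :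
    (lᵀ * X * l).trace = X.trace := by
  rw [Matrix.trace_mul_cycle, hl', one_mul]

private lemma delta3_trace (X Y : M3) :
    Delta3 X Y = (X * Yᵀ).trace := by
  simp [Delta3, Matrix.trace, Matrix.mul_apply, Matrix.diag]

end AuxInvariants

/-- STATEMENT 12: the fundamental invariants `Δ₁,…,Δ₅` of `K²(E³)` are invariant
under the parameter transformation rules induced by the isometry group `I(E³)`. -/
theorem invariants_Delta1_to_Delta5
    (A B C : M3) (hA : A.IsSymm) (hC : C.IsSymm)
    (l : M3) (hl : SO3 l) (δ : Fin 3 → ℝ) :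
    Delta1 (tB B C l δ) = Delta1 B ∧
    Delta2 (tC C l) = Delta2 C ∧
    Delta3 (tB B C l δ) (tC C l) = Delta3 B C ∧
    Delta4 (tC C l) = Delta4 C ∧
    Delta5 (tA A B C l δ) (tB B C l δ) (tC C l) = Delta5 A B C := by
  have hl' : l * lᵀ = 1 := mul_eq_one_comm.mp hl.1
  have hWT : (Wmat δ)ᵀ = !![0, -δ 2, δ 1; δ 2, 0, -δ 0; -δ 1, δ 0, 0] := by
    ext i j; fin_cases i <;> fin_cases j <;> simp [Wmat]
  have htB : tB B C l δ = lᵀ * (B + (Wmat δ)ᵀ * C) * l := by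
    simp only [tB, Matrix.transpose_mul]; noncomm_ring
  have htA : tA A B C l δ = lᵀ * (A + B * Wmat δ + (Wmat δ)ᵀ * Bᵀ
      + (Wmat δ)ᵀ * C * Wmat δ) * l := by
    simp only [tA, Matrix.transpose_mul]; noncomm_ring
  have htC : (tC C l)ᵀ = lᵀ * Cᵀ * l := by
    simp only [tC, Matrix.transpose_mul, Matrix.transpose_transpose]; noncomm_ring
  have h10 : C 1 0 = C 0 1 := hC.apply 0 1
  have h20 : C 2 0 = C 0 2 := hC.apply 0 2
  have h21 : C 2 1 = C 1 2 := hC.apply 1 2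
  have a10 : A 1 0 = A 0 1 := hA.apply 0 1
  have a20 : A 2 0 = A 0 2 := hA.apply 0 2
  have a21 : A 2 1 = A 1 2 := hA.apply 1 2
  refine ⟨?_, ?_, ?_, ?_, ?_⟩
  · rw [Delta1, htB, conj_trace _ _ hl', Delta1]
    rw [hWT]
    simp [Matrix.trace, Matrix.mul_apply, Matrix.diag, Fin.sum_univ_three,
      Matrix.add_apply, Matrix.vecMul, dotProduct, h10, h20, h21]
    ring
  · rw [Delta2, tC, conj_trace _ _ hl', Delta2]
  · rw [delta3_trace, htB, htC, conj_mul' _ _ _ hl', conj_trace _ _ hl', delta3_trace]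
    rw [hWT]
    simp [Matrix.trace, Matrix.mul_apply, Matrix.diag, Fin.sum_univ_three,
      Matrix.add_apply, Matrix.vecMul, dotProduct, h10, h20, h21]
    ring
  · rw [Delta4, ← Delta3, delta3_trace, htC, show tC C l = lᵀ * C * l from rfl,
      conj_mul' _ _ _ hl', conj_trace _ _ hl', Delta4, ← Delta3, delta3_trace,
      hC]
  · rw [Delta5, Delta5, ← Delta3, ← Delta3, delta3_trace, delta3_trace,
      htA, htB, htC, conj_mul' _ _ _ hl', conj_mul' _ _ _ hl',
      conj_trace _ _ hl', conj_trace _ _ hl']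
    rw [hWT]
    simp [Matrix.trace, Matrix.mul_apply, Matrix.diag, Fin.sum_univ_three,
      Matrix.add_apply, Matrix.vecMul, dotProduct, Wmat, Matrix.transpose_apply,
      h10, h20, h21, a10, a20, a21]
    ring
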